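/- arXiv:2012.01235 — 6 statements merged into one kernel-verified Lean document; each statement's English description precedes it below -/
import Mathlib

section
/- Let λ > 0, β ∈ ℝ, κ ∈ ℝ with κ ≠ 1. Define c(t) = (1/β + (1/λ - 1/β)·exp(-(κ-1)βt))⁻¹ if β ≠ 0, and c(t) = ((κ-1)t + 1/λ)⁻¹ if β = 0. Then on any interval where c is defined and positive, c satisfies the functional equation c(t)·exp((κ-1)·∫₀ᵗ c(s) ds) = λ·exp(β(κ-1)t). -/
/-!
The reciprocal `u = 1/c` solves the linear equation `u' = a (1 - β u)`, `u 0 = 1/λ`, with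
`a = κ - 1`. Hence `w s = exp (a β s) * u s` has `w' s = a * exp (a β s)`, so that `a * c = w' / w`
and `exp (a ∫₀ᵗ c) = w t / w 0 = λ exp (a β t) u t`.
-/

open Real Set intervalIntegral

theorem exp_integral_deriv_div_eq {w w' : ℝ → ℝ} {a b : ℝ}
    (hw : ∀ s ∈ uIcc a b, HasDerivAt w (w' s) s) (hpos : ∀ s ∈ uIcc a b, 0 < w s)
    (hint : IntervalIntegrable (fun s => w' s / w s) MeasureTheory.volume a b) :
    exp (∫ s in a..b, w' s / w s) = w b / w a := by
  have hlog : ∀ s ∈ uIcc a b, HasDerivAt (fun s => log (w s)) (w' s / w s) s :=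
    fun s hs => (hw s hs).log (hpos s hs).ne'
  rw [integral_eq_sub_of_hasDerivAt hlog hint, exp_sub, exp_log (hpos b right_mem_uIcc),
    exp_log (hpos a left_mem_uIcc)]

theorem inv_mul_exp_integral_inv_of_hasDerivAt {u : ℝ → ℝ} {a β t : ℝ}
    (hu : ∀ s ∈ uIcc 0 t, HasDerivAt u (a * (1 - β * u s)) s)
    (hpos : ∀ s ∈ uIcc 0 t, 0 < u s) :
    (u t)⁻¹ * exp (a * ∫ s in (0:ℝ)..t, (u s)⁻¹) = (u 0)⁻¹ * exp (β * a * t) := by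
  set w : ℝ → ℝ := fun s => exp (a * β * s) * u s
  have hw : ∀ s ∈ uIcc 0 t, HasDerivAt w (a * exp (a * β * s)) s := by
    intro s hs
    have hexp : HasDerivAt (fun s => exp (a * β * s)) (exp (a * β * s) * (a * β)) s := by
      simpa using ((hasDerivAt_id s).const_mul (a * β)).exp
    exact (hexp.mul (hu s hs)).congr_deriv (by ring)
  have hwpos : ∀ s ∈ uIcc 0 t, 0 < w s := fun s hs => mul_pos (exp_pos _) (hpos s hs)
  have hint : IntervalIntegrable (fun s => a * exp (a * β * s) / w s) MeasureTheory.volume 0 t :=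
    (ContinuousOn.div (by fun_prop) (fun s hs => (hw s hs).continuousAt.continuousWithinAt)
      fun s hs => (hwpos s hs).ne').intervalIntegrable
  have hlogderiv : a * ∫ s in (0:ℝ)..t, (u s)⁻¹ = ∫ s in (0:ℝ)..t, a * exp (a * β * s) / w s := by
    rw [← integral_const_mul]
    refine integral_congr fun s _ => ?_
    simp only [w]
    field_simp
  rw [hlogderiv, exp_integral_deriv_div_eq hw hwpos hint]
  have hu0 := (hpos 0 left_mem_uIcc).ne'
  have hut := (hpos t right_mem_uIcc).ne'
  simp only [w, mul_zero, exp_zero, one_mul]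
  field_simp

noncomputable def invConsumption (lam β a s : ℝ) : ℝ :=
  if β = 0 then a * s + 1 / lam else 1 / β + (1 / lam - 1 / β) * exp (-a * β * s)

theorem invConsumption_zero (lam β a : ℝ) : invConsumption lam β a 0 = 1 / lam := by
  unfold invConsumption
  split_ifs <;> simp

theorem hasDerivAt_invConsumption (lam β a s : ℝ) :
    HasDerivAt (invConsumption lam β a) (a * (1 - β * invConsumption lam β a s)) s := by
  unfold invConsumption
  by_cases hβ : β = 0
  · simp only [hβ, if_true, zero_mul, sub_zero, mul_one]
    simpa using ((hasDerivAt_id s).const_mul a).add_const (1 / lam)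
  · simp only [hβ, if_false]
    have hexp : HasDerivAt (fun s => exp (-a * β * s)) (exp (-a * β * s) * (-a * β)) s := by
      simpa using ((hasDerivAt_id s).const_mul (-a * β)).exp
    refine ((hexp.const_mul (1 / lam - 1 / β)).const_add (1 / β)).congr_deriv ?_
    field_simp
    ring

theorem stmt0_general (lam β κ : ℝ)
    (c : ℝ → ℝ)
    (hc : c = fun t => if β = 0 then ((κ-1)*t + 1/lam)⁻¹
          else (1/β + (1/lam - 1/β) * Real.exp (-(κ-1)*β*t))⁻¹) :
    ∀ t : ℝ, 0 ≤ t → (∀ s ∈ Set.Icc (0:ℝ) t, 0 < c s) →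
      c t * Real.exp ((κ-1) * ∫ s in (0:ℝ)..t, c s) = lam * Real.exp (β*(κ-1)*t) := by
  intro t ht hpos
  have hcu : c = fun s => (invConsumption lam β (κ - 1) s)⁻¹ := by
    rw [hc]
    funext s
    unfold invConsumption
    split_ifs <;> rfl
  subst hcu
  rw [← uIcc_of_le ht] at hpos
  rw [inv_mul_exp_integral_inv_of_hasDerivAt (fun s _ => hasDerivAt_invConsumption _ _ _ s)
    fun s hs => inv_pos.mp (hpos s hs), invConsumption_zero, one_div, inv_inv]

theorem stmt0 (lam β κ : ℝ) (hlam : 0 < lam) (hκ : κ ≠ 1)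
    (c : ℝ → ℝ)
    (hc : c = fun t => if β = 0 then ((κ-1)*t + 1/lam)⁻¹
          else (1/β + (1/lam - 1/β) * Real.exp (-(κ-1)*β*t))⁻¹) :
    ∀ t : ℝ, 0 ≤ t → (∀ s ∈ Set.Icc (0:ℝ) t, 0 < c s) →
      c t * Real.exp ((κ-1) * ∫ s in (0:ℝ)..t, c s) = lam * Real.exp (β*(κ-1)*t) :=
  stmt0_general lam β κ c hc
end

section
/- Let κ ≠ 1, β ≠ 0, λ > 0 and suppose either κ > 1, or (κ < 1 and β > λ). Then the function c(t) = (1/β + (1/λ - 1/β)·exp(-(κ-1)βt))⁻¹ is well-defined (the denominator never vanishes), continuous, and strictly positive for all t ≥ 0. -/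
theorem stmt1 (lam β κ : ℝ) (hκ : κ ≠ 1) (hβ : β ≠ 0) (hlam : 0 < lam)
    (hcase : 1 < κ ∨ (κ < 1 ∧ lam < β)) :
    (∀ t : ℝ, 0 ≤ t → 1/β + (1/lam - 1/β) * Real.exp (-(κ-1)*β*t) ≠ 0) ∧
    ContinuousOn (fun t => (1/β + (1/lam - 1/β) * Real.exp (-(κ-1)*β*t))⁻¹)
      (Set.Ici (0:ℝ)) ∧
    (∀ t : ℝ, 0 ≤ t →
      0 < (1/β + (1/lam - 1/β) * Real.exp (-(κ-1)*β*t))⁻¹) := by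
  have key : ∀ t : ℝ, 0 ≤ t →
      0 < 1/β + (1/lam - 1/β) * Real.exp (-(κ-1)*β*t) := by
    intro t ht
    set e := Real.exp (-(κ-1)*β*t) with he
    have hepos : 0 < e := Real.exp_pos _
    have hlpos : 0 < 1/lam := one_div_pos.mpr hlam
    rcases hcase with hk | ⟨hk, hlb⟩
    · rcases lt_or_gt_of_ne hβ with hbneg | hbpos
      · have h1 : 1 ≤ e := by
          rw [he]
          calc (1:ℝ) = Real.exp 0 := Real.exp_zero.symm
            _ ≤ Real.exp (-(κ-1)*β*t) := Real.exp_le_exp.mpr (by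
                nlinarith [mul_nonneg (mul_nonneg (sub_pos.mpr hk).le
                  (neg_nonneg.mpr hbneg.le)) ht])
        have hb : 1/β < 0 := one_div_neg.mpr hbneg
        nlinarith [mul_pos hlpos hepos,
          mul_nonneg (neg_nonneg.mpr hb.le) (sub_nonneg.mpr h1)]
      · have h1 : e ≤ 1 := by
          rw [he]
          calc Real.exp (-(κ-1)*β*t) ≤ Real.exp 0 :=
                Real.exp_le_exp.mpr (by
                  nlinarith [mul_nonneg (mul_nonneg (sub_pos.mpr hk).le
                    hbpos.le) ht])
            _ = 1 := Real.exp_zero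
        have hb : 0 < 1/β := one_div_pos.mpr hbpos
        nlinarith [mul_pos hlpos hepos, mul_nonneg hb.le (sub_nonneg.mpr h1)]
    · have hbpos : 0 < β := hlam.trans hlb
      have h1 : 1 ≤ e := by
        rw [he]
        calc (1:ℝ) = Real.exp 0 := Real.exp_zero.symm
          _ ≤ Real.exp (-(κ-1)*β*t) := Real.exp_le_exp.mpr (by
            nlinarith [mul_nonneg (mul_nonneg (sub_pos.mpr hk).le hbpos.le) ht])
      have hb : 1/β < 1/lam := one_div_lt_one_div_of_lt hlam hlb
      nlinarith [mul_nonneg (sub_nonneg.mpr hb.le) (sub_nonneg.mpr h1)]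
  refine ⟨fun t ht => (key t ht).ne', ?_, fun t ht => inv_pos.mpr (key t ht)⟩
  have hc : Continuous fun t : ℝ => 1/β + (1/lam - 1/β) * Real.exp (-(κ-1)*β*t) := by
    fun_prop
  exact hc.continuousOn.inv₀ fun t ht => (key t ht).ne'
end

section
/- Let κ > 1, λ > 0 and β < 0. Then c(t) = (1/β + (1/λ - 1/β)·exp(-(κ-1)βt))⁻¹ is strictly positive and strictly decreasing on [0,∞) with c(t) → 0 as t → ∞. -/
theorem stmt4 (lam β κ : ℝ) (hκ : 1 < κ) (hlam : 0 < lam) (hβ : β < 0)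
    (c : ℝ → ℝ)
    (hc : c = fun t => (1/β + (1/lam - 1/β) * Real.exp (-(κ-1)*β*t))⁻¹) :
    (∀ t : ℝ, 0 ≤ t → 0 < c t) ∧ StrictAntiOn c (Set.Ici (0:ℝ)) ∧
      Filter.Tendsto c Filter.atTop (nhds 0) := by
  have ha : 0 < -(κ-1)*β := by nlinarith
  have hcoef : 0 < 1/lam - 1/β := by
    have h1 : 0 < 1/lam := by positivity
    have h2 : 1/β < 0 := by
      exact one_div_neg.mpr hβ
    linarith
  have hdpos : ∀ t : ℝ, 0 ≤ t → 0 < 1/β + (1/lam - 1/β) * Real.exp (-(κ-1)*β*t) := by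
    intro t ht
    have h1 : (1:ℝ) ≤ Real.exp (-(κ-1)*β*t) := Real.one_le_exp (by positivity)
    have h2 : 1/lam - 1/β ≤ (1/lam - 1/β) * Real.exp (-(κ-1)*β*t) := by
      nlinarith
    have h3 : 0 < 1/lam := by positivity
    linarith
  refine ⟨?_, ?_, ?_⟩
  · intro t ht
    rw [hc]
    exact inv_pos.mpr (hdpos t ht)
  · intro s hs t ht hst
    rw [hc]
    simp only
    have hd : 1/β + (1/lam - 1/β) * Real.exp (-(κ-1)*β*s)
        < 1/β + (1/lam - 1/β) * Real.exp (-(κ-1)*β*t) := by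
      have := Real.exp_lt_exp.mpr (mul_lt_mul_of_pos_left hst ha)
      nlinarith
    exact inv_strictAnti₀ (hdpos s hs) hd
  · rw [hc]
    apply Filter.Tendsto.inv_tendsto_atTop
    apply Filter.tendsto_atTop_add_const_left
    apply Filter.Tendsto.const_mul_atTop hcoef
    exact Real.tendsto_exp_atTop.comp (Filter.Tendsto.const_mul_atTop ha Filter.tendsto_id)
end

section
/- Let κ ≠ 1, β ≠ 0, λ > 0 with λ ≠ β. For the function c(t) = (1/β + (1/λ - 1/β)·exp(-(κ-1)βt))⁻¹, on any interval [0,T] where c is defined, the integral satisfies (κ-1)·∫₀ᵗ c(s) ds = log(1 + (λ/β)(exp((κ-1)βt) - 1)). -/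
/-!
Put `r = (κ - 1) β` and `D(s) = 1/β + (1/λ - 1/β) e^{-rs} = 1 / c(s)`. Then
`1 + (λ/β)(e^{rt} - 1) = λ e^{rt} D(t)`, and `log (e^{rs} D(s)) = log (e^{rs}/β + 1/λ - 1/β)`
has derivative `(r/β) e^{rs} / (e^{rs} D(s)) = (κ - 1) c(s)`; the identity is the fundamental
theorem of calculus.
-/

open Real Set intervalIntegral

section InvAddMulExp

variable {p q r : ℝ}

lemma mul_exp_add_ne_zero {s : ℝ} (h : p + q * exp (-(r * s)) ≠ 0) :
    p * exp (r * s) + q ≠ 0 := by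
  have hmul : p * exp (r * s) + q = exp (r * s) * (p + q * exp (-(r * s))) := by
    rw [mul_add, ← mul_assoc, mul_comm (exp _) q, mul_assoc, ← exp_add, add_neg_cancel, exp_zero]
    ring
  rw [hmul]
  exact mul_ne_zero (exp_ne_zero _) h

lemma hasDerivAt_log_mul_exp_add {s : ℝ} (h : p + q * exp (-(r * s)) ≠ 0) :
    HasDerivAt (fun x => log (p * exp (r * x) + q)) (r * p * (p + q * exp (-(r * s)))⁻¹) s := by
  have hlin : HasDerivAt (fun x => r * x) r s := by
    simpa using (hasDerivAt_id s).const_mul r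
  convert ((hlin.exp.const_mul p).add_const q).log (mul_exp_add_ne_zero h) using 1
  rw [exp_neg]
  field_simp

/- No sign condition is needed: `Real.log` is `log |·|` away from `0`, whose derivative is
still `x⁻¹`. -/
lemma mul_integral_inv_add_mul_exp {t : ℝ}
    (h : ∀ s ∈ uIcc 0 t, p + q * exp (-(r * s)) ≠ 0) :
    r * p * ∫ s in (0 : ℝ)..t, (p + q * exp (-(r * s)))⁻¹
      = log ((p * exp (r * t) + q) / (p + q)) := by
  have hcont : ContinuousOn (fun s => (p + q * exp (-(r * s)))⁻¹) (uIcc 0 t) :=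
    (by fun_prop : Continuous fun s => p + q * exp (-(r * s))).continuousOn.inv₀ h
  rw [← integral_const_mul,
    integral_eq_sub_of_hasDerivAt (fun s hs => hasDerivAt_log_mul_exp_add (h s hs))
      (hcont.const_smul (r * p)).intervalIntegrable]
  have h0 := h 0 left_mem_uIcc
  simp only [mul_zero, neg_zero, exp_zero, mul_one] at h0 ⊢
  rw [log_div (mul_exp_add_ne_zero (h t right_mem_uIcc)) h0]

end InvAddMulExp

theorem stmt7_general (lam β κ : ℝ) (hβ : β ≠ 0) (hlam : 0 < lam)
    (c : ℝ → ℝ)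
    (hc : c = fun t => (1/β + (1/lam - 1/β) * Real.exp (-(κ-1)*β*t))⁻¹) :
    ∀ t : ℝ, 0 ≤ t →
      (∀ s ∈ Set.Icc (0:ℝ) t, 1/β + (1/lam - 1/β) * Real.exp (-(κ-1)*β*s) ≠ 0) →
      (κ-1) * ∫ s in (0:ℝ)..t, c s
        = Real.log (1 + (lam/β) * (Real.exp ((κ-1)*β*t) - 1)) := by
  intro t ht hD
  have hexp : ∀ s, -(κ - 1) * β * s = -((κ - 1) * β * s) := fun s => by ring
  simp only [hexp] at hc hD
  rw [← uIcc_of_le ht] at hD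
  have hint := mul_integral_inv_add_mul_exp hD
  have hcoef : (κ - 1) * β * (1 / β) = κ - 1 := by field_simp
  rw [hcoef, ← hc] at hint
  rw [hint]
  have hsum : 1 / β + (1 / lam - 1 / β) = 1 / lam := by ring
  rw [hsum, div_div_eq_mul_div, div_one]
  congr 1
  field_simp
  ring

theorem stmt7 (lam β κ : ℝ) (hκ : κ ≠ 1) (hβ : β ≠ 0) (hlam : 0 < lam) (hne : lam ≠ β)
    (c : ℝ → ℝ)
    (hc : c = fun t => (1/β + (1/lam - 1/β) * Real.exp (-(κ-1)*β*t))⁻¹) :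
    ∀ t : ℝ, 0 ≤ t →
      (∀ s ∈ Set.Icc (0:ℝ) t, 1/β + (1/lam - 1/β) * Real.exp (-(κ-1)*β*s) ≠ 0) →
      (κ-1) * ∫ s in (0:ℝ)..t, c s
        = Real.log (1 + (lam/β) * (Real.exp ((κ-1)*β*t) - 1)) :=
  stmt7_general lam β κ hβ hlam c hc
end

section
/- Fix n ≥ 2 and for i = 1,…,n let μᵢ > 0, σᵢ ≥ 0, νᵢ ≥ 0 with σᵢ² + νᵢ² > 0, δᵢ > 0, θᵢ ∈ [0,1], and suppose νᵢ² + σᵢ²(1 + θᵢ(1-δᵢ)/(n-1)) ≠ 0. Define φₙ = (1/n)·Σₖ δₖ σₖ μₖ / (νₖ² + σₖ²(1 + θₖ(1-δₖ)/(n-1))) and ψₙ = (1/(n-1))·Σₖ θₖ(1-δₖ) σₖ² / (νₖ² + σₖ²(1 + θₖ(1-δₖ)/(n-1))). If ψₙ ≠ 1, then the linear system πᵢ(νᵢ² + σᵢ²) = θᵢσᵢ(1-δᵢ)·(1/(n-1))·Σ_{k≠i} σₖπₖ + μᵢδᵢ, i = 1,…,n, has the unique solution πᵢ = (θᵢσᵢ(1-δᵢ)·(n/(n-1))·φₙ/(1-ψₙ)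 + μᵢδᵢ) / (νᵢ² + σᵢ²(1 + θᵢ(1-δᵢ)/(n-1))), and this solution satisfies (1/n)·Σₖ σₖπₖ = φₙ/(1-ψₙ). -/
/-!
Put `S = ∑ₖ σₖπₖ`. Since `∑_{k ≠ i} σₖπₖ = S - σᵢπᵢ`, the i-th equation says exactly that `πᵢ`
is the response `(aᵢ c S + bᵢ) / Eᵢ` to the aggregate `S`, where `Eᵢ` is the paper's denominator.
Feeding these responses back into `S` gives the scalar equation `S = ψₙ S + n φₙ`, whose only
root for `ψₙ ≠ 1` is `S = n φₙ / (1 - ψₙ)`.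
-/

open Finset

noncomputable section

namespace MeanFieldLinearSystem

variable {ι : Type*} [Fintype ι] (D a s b : ι → ℝ) (c : ℝ)

def IsSolution [DecidableEq ι] (x : ι → ℝ) : Prop :=
  ∀ i, x i * D i = a i * (c * ∑ k ∈ univ.erase i, s k * x k) + b i

-- For `D = ν² + σ²`, `a = θσ(1 - δ)`, `s = σ`, `b = μδ` and `c = 1 / (n - 1)`, `denom` is the
-- paper's denominator, `feedback` is `ψₙ` and `baseAggregate` is `n φₙ`.
def denom (i : ι) : ℝ := D i + c * a i * s i

def response (S : ℝ) (i : ι) : ℝ := (a i * c * S + b i) / denom D a s c i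

def feedback : ℝ := c * ∑ i, a i * s i / denom D a s c i

def baseAggregate : ℝ := ∑ i, s i * b i / denom D a s c i

def equilibriumAggregate : ℝ := baseAggregate D a s b c / (1 - feedback D a s c)

variable {D a s b c}

theorem isSolution_iff_eq_response [DecidableEq ι] (hden : ∀ i, denom D a s c i ≠ 0)
    (x : ι → ℝ) : IsSolution D a s b c x ↔ x = response D a s b c (∑ k, s k * x k) := by
  simp only [IsSolution, funext_iff, response, sum_erase_eq_sub (mem_univ _)]
  refine forall_congr' fun i => ?_
  rw [eq_div_iff (hden i), denom]
  constructor <;> intro h <;> linear_combination h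

theorem sum_mul_response (S : ℝ) :
    ∑ i, s i * response D a s b c S i = S * feedback D a s c + baseAggregate D a s b c := by
  simp only [response, feedback, baseAggregate, mul_sum, ← sum_add_distrib]
  refine sum_congr rfl fun i _ => ?_
  ring

theorem sum_mul_response_eq_self_iff (hψ : feedback D a s c ≠ 1) (S : ℝ) :
    ∑ i, s i * response D a s b c S i = S ↔ S = equilibriumAggregate D a s b c := by
  rw [sum_mul_response, equilibriumAggregate, eq_div_iff (sub_ne_zero.2 hψ.symm)]
  constructor <;> intro h <;> linear_combination -h

theorem sum_mul_response_equilibriumAggregate (hψ : feedback D a s c ≠ 1) :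
    ∑ i, s i * response D a s b c (equilibriumAggregate D a s b c) i =
      equilibriumAggregate D a s b c :=
  (sum_mul_response_eq_self_iff hψ _).2 rfl

theorem isSolution_iff_eq_response_equilibriumAggregate [DecidableEq ι]
    (hden : ∀ i, denom D a s c i ≠ 0) (hψ : feedback D a s c ≠ 1) (x : ι → ℝ) :
    IsSolution D a s b c x ↔ x = response D a s b c (equilibriumAggregate D a s b c) := by
  rw [isSolution_iff_eq_response hden]
  constructor
  · intro hx
    have hS : ∑ k, s k * response D a s b c (∑ j, s j * x j) k = ∑ j, s j * x j := by
      rw [← hx]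
    rwa [(sum_mul_response_eq_self_iff hψ _).1 hS] at hx
  · rintro rfl
    rw [sum_mul_response_equilibriumAggregate hψ]

end MeanFieldLinearSystem

end

open MeanFieldLinearSystem

theorem stmt11_general (n : ℕ)
    (μ σ ν δ θ : Fin n → ℝ)
    (hden : ∀ i, ν i ^ 2 + σ i ^ 2 * (1 + θ i * (1 - δ i) / ((n:ℝ) - 1)) ≠ 0)
    (φ ψ : ℝ)
    (hφ : φ = (1/(n:ℝ)) * ∑ k, δ k * σ k * μ k /
      (ν k ^ 2 + σ k ^ 2 * (1 + θ k * (1 - δ k) / ((n:ℝ) - 1))))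
    (hψ : ψ = (1/((n:ℝ)-1)) * ∑ k, θ k * (1 - δ k) * σ k ^ 2 /
      (ν k ^ 2 + σ k ^ 2 * (1 + θ k * (1 - δ k) / ((n:ℝ) - 1))))
    (hψ1 : ψ ≠ 1)
    (πs : Fin n → ℝ)
    (hπs : πs = fun i =>
      (θ i * σ i * (1 - δ i) * ((n:ℝ)/((n:ℝ)-1)) * (φ/(1-ψ)) + μ i * δ i) /
      (ν i ^ 2 + σ i ^ 2 * (1 + θ i * (1 - δ i) / ((n:ℝ) - 1)))) :
    (∀ i, πs i * (ν i ^ 2 + σ i ^ 2) =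
      θ i * σ i * (1 - δ i) * ((1/((n:ℝ)-1)) * ∑ k ∈ Finset.univ.erase i, σ k * πs k)
        + μ i * δ i) ∧
    ((1/(n:ℝ)) * ∑ k, σ k * πs k = φ/(1-ψ)) ∧
    (∀ π : Fin n → ℝ,
      (∀ i, π i * (ν i ^ 2 + σ i ^ 2) =
        θ i * σ i * (1 - δ i) * ((1/((n:ℝ)-1)) * ∑ k ∈ Finset.univ.erase i, σ k * π k)
          + μ i * δ i) → π = πs) := by
  set D : Fin n → ℝ := fun i => ν i ^ 2 + σ i ^ 2
  set a : Fin n → ℝ := fun i => θ i * σ i * (1 - δ i)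
  set b : Fin n → ℝ := fun i => μ i * δ i
  set c : ℝ := 1 / ((n:ℝ) - 1)
  have hE : ∀ i, ν i ^ 2 + σ i ^ 2 * (1 + θ i * (1 - δ i) / ((n:ℝ) - 1)) = denom D a σ c i :=
    fun i => by simp only [denom, D, a, c]; ring
  simp only [hE] at hden hφ hψ hπs
  have hψ' : ψ = feedback D a σ c := by
    rw [hψ, feedback, mul_sum, mul_sum]
    exact sum_congr rfl fun k _ => by simp only [a]; ring
  have hφ' : φ = 1 / (n:ℝ) * baseAggregate D a σ b c := by
    rw [hφ, baseAggregate]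
    exact congrArg _ (sum_congr rfl fun k _ => by simp only [b]; ring)
  have hmean : φ / (1 - ψ) = 1 / (n:ℝ) * equilibriumAggregate D a σ b c := by
    rw [hφ', hψ', equilibriumAggregate, mul_div_assoc]
  have hπs' : πs = response D a σ b c (equilibriumAggregate D a σ b c) := by
    funext i
    have hn0 : (n:ℝ) ≠ 0 := Nat.cast_ne_zero.2 i.pos.ne'
    simp only [hπs, hmean, response, a, b, c]
    congr 2
    field_simp
  have hfb : feedback D a σ c ≠ 1 := hψ' ▸ hψ1
  have hsol := isSolution_iff_eq_response_equilibriumAggregate (b := b) hden hfb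
  refine ⟨(hsol πs).2 hπs', ?_, fun π hπ => hπs' ▸ (hsol π).1 hπ⟩
  rw [hmean, hπs', sum_mul_response_equilibriumAggregate hfb]

theorem stmt11 (n : ℕ) (hn : 2 ≤ n)
    (μ σ ν δ θ : Fin n → ℝ)
    (hμ : ∀ i, 0 < μ i) (hσ : ∀ i, 0 ≤ σ i) (hν : ∀ i, 0 ≤ ν i)
    (hσν : ∀ i, 0 < σ i ^ 2 + ν i ^ 2)
    (hδ : ∀ i, 0 < δ i) (hθ : ∀ i, θ i ∈ Set.Icc (0:ℝ) 1)
    (hden : ∀ i, ν i ^ 2 + σ i ^ 2 * (1 + θ i * (1 - δ i) / ((n:ℝ) - 1)) ≠ 0)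
    (φ ψ : ℝ)
    (hφ : φ = (1/(n:ℝ)) * ∑ k, δ k * σ k * μ k /
      (ν k ^ 2 + σ k ^ 2 * (1 + θ k * (1 - δ k) / ((n:ℝ) - 1))))
    (hψ : ψ = (1/((n:ℝ)-1)) * ∑ k, θ k * (1 - δ k) * σ k ^ 2 /
      (ν k ^ 2 + σ k ^ 2 * (1 + θ k * (1 - δ k) / ((n:ℝ) - 1))))
    (hψ1 : ψ ≠ 1)
    (πs : Fin n → ℝ)
    (hπs : πs = fun i =>
      (θ i * σ i * (1 - δ i) * ((n:ℝ)/((n:ℝ)-1)) * (φ/(1-ψ)) + μ i * δ i) /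
      (ν i ^ 2 + σ i ^ 2 * (1 + θ i * (1 - δ i) / ((n:ℝ) - 1)))) :
    (∀ i, πs i * (ν i ^ 2 + σ i ^ 2) =
      θ i * σ i * (1 - δ i) * ((1/((n:ℝ)-1)) * ∑ k ∈ Finset.univ.erase i, σ k * πs k)
        + μ i * δ i) ∧
    ((1/(n:ℝ)) * ∑ k, σ k * πs k = φ/(1-ψ)) ∧
    (∀ π : Fin n → ℝ,
      (∀ i, π i * (ν i ^ 2 + σ i ^ 2) =
        θ i * σ i * (1 - δ i) * ((1/((n:ℝ)-1)) * ∑ k ∈ Finset.univ.erase i, σ k * π k)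
          + μ i * δ i) → π = πs) :=
  stmt11_general n μ σ ν δ θ hden φ ψ hφ hψ hψ1 πs hπs
end

section
/- Let (Ω, 𝔽, ℙ) carry a random type vector with components δ > 0, θ ∈ [0,1], μ > 0, σ ≥ 0, ν ≥ 0 and σ² + ν² > 0 almost surely. Set ψ = E[θ(1-δ)σ²/(ν²+σ²)] and φ = E[δμσ/(ν²+σ²)], assumed finite. If ψ ≠ 1, then the random variable π* = (θ(1-δ)σ·φ/(1-ψ) + μδ)/(ν²+σ²) satisfies the mean-field consistency condition E[σπ*] = φ/(1-ψ). Moreover, if ψ = 1 then no random variable π with E[σπ] finite satisfies E[σπ] = ψ·E[σπ] + φ. -/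
/-!
Since `σ * π*` is affine in the population mean `m`, with slope the integrand of `ψ` and
intercept the integrand of `φ`, the consistency condition is the scalar equation
`m = ψ m + φ`, solved by `m = φ / (1 - ψ)` when `ψ ≠ 1`. If `ψ = 1`, that equation forces
`φ = 0`; as the integrand `δ μ σ / (ν² + σ²)` is nonnegative with `δ μ / (ν² + σ²) > 0`,
this gives `σ = 0` a.s., hence `ψ = 0`, a contradiction.
-/

open MeasureTheory

section
variable {Ω : Type*} [MeasurableSpace Ω] {P : Measure Ω}

theorem ae_eq_zero_of_integral_mul_eq_zero {c f : Ω → ℝ} (hc : ∀ᵐ ω ∂P, 0 < c ω)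
    (hf : 0 ≤ᵐ[P] f) (hint : Integrable (fun ω => c ω * f ω) P)
    (h : ∫ ω, c ω * f ω ∂P = 0) : f =ᵐ[P] 0 := by
  have hnonneg : 0 ≤ᵐ[P] fun ω => c ω * f ω := by
    filter_upwards [hc, hf] with ω hcω hfω
    exact mul_nonneg hcω.le hfω
  filter_upwards [(integral_eq_zero_iff_of_nonneg_ae hnonneg hint).mp h, hc] with ω h0 hcω
  exact (mul_eq_zero.mp h0).resolve_left hcω.ne'

variable {δ θ μ σ ν : Ω → ℝ}

theorem integral_mul_bestResponse
    (hint1 : Integrable (fun ω => θ ω * (1 - δ ω) * σ ω ^ 2 / (ν ω ^ 2 + σ ω ^ 2)) P)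
    (hint2 : Integrable (fun ω => δ ω * μ ω * σ ω / (ν ω ^ 2 + σ ω ^ 2)) P) (m : ℝ) :
    ∫ ω, σ ω * ((θ ω * (1 - δ ω) * σ ω * m + μ ω * δ ω) / (ν ω ^ 2 + σ ω ^ 2)) ∂P =
      (∫ ω, θ ω * (1 - δ ω) * σ ω ^ 2 / (ν ω ^ 2 + σ ω ^ 2) ∂P) * m +
        ∫ ω, δ ω * μ ω * σ ω / (ν ω ^ 2 + σ ω ^ 2) ∂P := by
  have hsplit : (fun ω => σ ω * ((θ ω * (1 - δ ω) * σ ω * m + μ ω * δ ω) /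
      (ν ω ^ 2 + σ ω ^ 2))) = fun ω => θ ω * (1 - δ ω) * σ ω ^ 2 / (ν ω ^ 2 + σ ω ^ 2) * m +
        δ ω * μ ω * σ ω / (ν ω ^ 2 + σ ω ^ 2) := by
    funext ω
    ring
  rw [hsplit, integral_add (hint1.mul_const m) hint2, integral_mul_const]

theorem sigma_ae_eq_zero_of_integral_eq_zero
    (hae : ∀ᵐ ω ∂P, 0 < δ ω ∧ 0 < μ ω ∧ 0 ≤ σ ω ∧ 0 < σ ω ^ 2 + ν ω ^ 2)
    (hint : Integrable (fun ω => δ ω * μ ω * σ ω / (ν ω ^ 2 + σ ω ^ 2)) P)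
    (h : ∫ ω, δ ω * μ ω * σ ω / (ν ω ^ 2 + σ ω ^ 2) ∂P = 0) : σ =ᵐ[P] 0 := by
  have hweight : ∀ᵐ ω ∂P, 0 < δ ω * μ ω / (ν ω ^ 2 + σ ω ^ 2) := by
    filter_upwards [hae] with ω ⟨hδ, hμ, _, hD⟩
    exact div_pos (mul_pos hδ hμ) (by linarith)
  have hσ : 0 ≤ᵐ[P] σ := by
    filter_upwards [hae] with ω hω
    exact hω.2.2.1
  simp only [mul_div_right_comm _ (σ _)] at hint h
  exact ae_eq_zero_of_integral_mul_eq_zero hweight hσ hint h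

end

theorem stmt12 {Ω : Type*} [MeasurableSpace Ω] (P : Measure Ω) [IsProbabilityMeasure P]
    (δ θ μ σ ν : Ω → ℝ)
    (hae : ∀ᵐ ω ∂P, 0 < δ ω ∧ θ ω ∈ Set.Icc (0:ℝ) 1 ∧ 0 < μ ω ∧ 0 ≤ σ ω ∧ 0 ≤ ν ω ∧
      0 < σ ω ^ 2 + ν ω ^ 2)
    (hint1 : Integrable (fun ω => θ ω * (1 - δ ω) * σ ω ^ 2 / (ν ω ^ 2 + σ ω ^ 2)) P)
    (hint2 : Integrable (fun ω => δ ω * μ ω * σ ω / (ν ω ^ 2 + σ ω ^ 2)) P)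
    (ψ φ : ℝ)
    (hψ : ψ = ∫ ω, θ ω * (1 - δ ω) * σ ω ^ 2 / (ν ω ^ 2 + σ ω ^ 2) ∂P)
    (hφ : φ = ∫ ω, δ ω * μ ω * σ ω / (ν ω ^ 2 + σ ω ^ 2) ∂P)
    (πs : Ω → ℝ)
    (hπs : πs = fun ω =>
      (θ ω * (1 - δ ω) * σ ω * (φ/(1-ψ)) + μ ω * δ ω) / (ν ω ^ 2 + σ ω ^ 2)) :
    (ψ ≠ 1 → ∫ ω, σ ω * πs ω ∂P = φ/(1-ψ)) ∧
    (ψ = 1 → ¬ ∃ π : Ω → ℝ, Integrable (fun ω => σ ω * π ω) P ∧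
      ∫ ω, σ ω * π ω ∂P = ψ * ∫ ω, σ ω * π ω ∂P + φ) := by
  constructor
  · intro hψ1
    have h1ψ : 1 - ψ ≠ 0 := sub_ne_zero.mpr (Ne.symm hψ1)
    rw [hπs, integral_mul_bestResponse hint1 hint2, ← hψ, ← hφ]
    field_simp
    ring
  · rintro hψ1 ⟨π, -, hfix⟩
    have hφ0 : ∫ ω, δ ω * μ ω * σ ω / (ν ω ^ 2 + σ ω ^ 2) ∂P = 0 := by
      rw [← hφ]
      rw [hψ1, one_mul] at hfix
      linarith
    have hσ : σ =ᵐ[P] 0 := sigma_ae_eq_zero_of_integral_eq_zero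
      (hae.mono fun _ ⟨hδ, _, hμ, hσ, _, hD⟩ => ⟨hδ, hμ, hσ, hD⟩) hint2 hφ0
    have hψ0 : ψ = 0 := by
      rw [hψ, integral_eq_zero_of_ae]
      filter_upwards [hσ] with ω hσω
      simp [hσω]
    exact one_ne_zero (hψ1.symm.trans hψ0)
end
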